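/- arXiv:2504.13663 — 5 statements merged into one kernel-verified Lean document; each statement's English description precedes it below -/
import Mathlib

section
/- Let X be a reflexive real Banach space whose closed unit ball B_X equals the convex hull of its set of exposed points, and let Y be any real Banach space. Suppose T : X → Y is a nonzero compact bounded linear operator that is a left symmetric point of the space K(X,Y) of compact operators with respect to Birkhoff–James orthogonality. Then for every x ∈ M_T that is an exposed point of B_X, the vector Tx is a left symmetric point of Y with respect to Birkhoff–James orthogonality. -/
open Filter Topology Set Metric NormedSpace

noncomputable section

/-- Birkhoff–James orthogonality: `x ⊥_B y` iff `‖x + t • y‖ ≥ ‖x‖` for all real `t`. -/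
def BJOrth {E : Type*} [NormedAddCommGroup E] [NormedSpace ℝ E] (x y : E) : Prop :=
  ∀ t : ℝ, ‖x‖ ≤ ‖x + t • y‖

/-- The norm derivative `ρ'₊(x,y) = ‖x‖ · lim_{t→0⁺} (‖x+ty‖-‖x‖)/t`. -/
def rhoPlus {E : Type*} [NormedAddCommGroup E] [NormedSpace ℝ E] (x y : E) : ℝ :=
  ‖x‖ * limUnder (𝓝[>] (0 : ℝ)) (fun t => (‖x + t • y‖ - ‖x‖) / t)

/-- The norm derivative `ρ'₋(x,y) = ‖x‖ · lim_{t→0⁻} (‖x+ty‖-‖x‖)/t`. -/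
def rhoMinus {E : Type*} [NormedAddCommGroup E] [NormedSpace ℝ E] (x y : E) : ℝ :=
  ‖x‖ * limUnder (𝓝[<] (0 : ℝ)) (fun t => (‖x + t • y‖ - ‖x‖) / t)

/-- The norm derivative `ρ'(x,y) = (ρ'₊(x,y) + ρ'₋(x,y))/2`. -/
def rhoDer {E : Type*} [NormedAddCommGroup E] [NormedSpace ℝ E] (x y : E) : ℝ :=
  (rhoPlus x y + rhoMinus x y) / 2

/-- `x` is an exposed point of the closed unit ball of `E`: there is a norm-one functional `f`
with `f x = 1` and `f u < 1` for every `u` in the ball with `u ≠ x`. -/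
def ExposedPt {E : Type*} [NormedAddCommGroup E] [NormedSpace ℝ E] (x : E) : Prop :=
  ‖x‖ ≤ 1 ∧ ∃ f : E →L[ℝ] ℝ, ‖f‖ = 1 ∧ f x = 1 ∧ ∀ u : E, ‖u‖ ≤ 1 → u ≠ x → f u < 1

/-!
Let `f` expose `x` and let `T x ⊥_B y`. The rank-one operator `A = f ⊗ y` satisfies `T ⊥_B A`,
because `T` attains its norm at `x` and `(T + t A) x = T x + t y`; left symmetry gives `A ⊥_B T`,
so `‖A + s t T‖ ≥ ‖A‖ = ‖y‖`. An almost norming vector `w` of `A + s t T` with `f w ≥ 0`,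
compared with the convexity bound `‖y + s t T x‖ ≤ (1 - s) ‖y‖ + s ‖y + t T x‖`, yields
`‖y‖ - ‖y + t T x‖ < s + ‖t T w - f w • t T x‖` and `f w ≥ 1 - O(s)`. In a reflexive space the
unit ball is weakly compact, so as `s → 0` the vectors `w` converge weakly to the only point of
the ball where `f` equals `1`, namely `x`, and the compact operator `T` turns this into norm
convergence `T w → T x`. Hence `‖y‖ ≤ ‖y + t T x‖`.
-/

theorem BJOrth.smul_right {E : Type*} [NormedAddCommGroup E] [NormedSpace ℝ E] {x y : E}
    (h : BJOrth x y) (a : ℝ) : BJOrth x (a • y) := fun t => by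
  simpa only [smul_smul] using h (t * a)

theorem norm_smul_add_smul_le {E : Type*} [NormedAddCommGroup E] [NormedSpace ℝ E]
    (y v z : E) {a s : ℝ} (ha0 : 0 ≤ a) (ha1 : a ≤ 1) (hs0 : 0 ≤ s) (hs1 : s ≤ 1) :
    ‖a • y + s • z‖ ≤ (1 - s) * ‖y‖ + s * ‖y + v‖ + s * ‖z - a • v‖ := by
  have hconv : ‖(1 - s) • y + s • (y + v)‖ ≤ (1 - s) * ‖y‖ + s * ‖y + v‖ :=
    norm_add_le_of_le (norm_smul_of_nonneg (sub_nonneg.2 hs1) y).le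
      (norm_smul_of_nonneg hs0 _).le
  calc ‖a • y + s • z‖ = ‖a • ((1 - s) • y + s • (y + v)) + s • (z - a • v)‖ := by
        congr 1; module
    _ ≤ a * ‖(1 - s) • y + s • (y + v)‖ + s * ‖z - a • v‖ :=
        norm_add_le_of_le (norm_smul_of_nonneg ha0 _).le (norm_smul_of_nonneg hs0 _).le
    _ ≤ (1 - s) * ‖y‖ + s * ‖y + v‖ + s * ‖z - a • v‖ := by
        gcongr
        exact (mul_le_of_le_one_left (norm_nonneg _) ha1).trans hconv

theorem Ultrafilter.exists_mem_closedBall_forall_tendsto_dual {𝕜 X : Type*} [RCLike 𝕜]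
    [NormedAddCommGroup X] [NormedSpace 𝕜 X]
    (hrefl : Function.Surjective (inclusionInDoubleDual 𝕜 X)) (U : Ultrafilter X)
    (hU : closedBall (0 : X) 1 ∈ U) :
    ∃ u ∈ closedBall (0 : X) 1, ∀ h : StrongDual 𝕜 X, Tendsto h U (𝓝 (h u)) := by
  set ψ : X → WeakDual 𝕜 (StrongDual 𝕜 X) :=
    fun w => StrongDual.toWeakDual (inclusionInDoubleDual 𝕜 X w)
  have hψ : WeakDual.toStrongDual ⁻¹' closedBall 0 1 ∈ U.map ψ :=
    Ultrafilter.mem_map.2 <| mem_of_superset hU fun w hw =>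
      (mem_closedBall_zero_iff (E := StrongDual 𝕜 (StrongDual 𝕜 X))).2
        ((double_dual_bound 𝕜 X w).trans (mem_closedBall_zero_iff.1 hw))
  obtain ⟨Φ, hΦ, hUΦ⟩ :=
    (WeakDual.isCompact_closedBall 0 1).ultrafilter_le_nhds _ (Filter.le_principal_iff.2 hψ)
  obtain ⟨u, hu⟩ := hrefl (WeakDual.toStrongDual Φ)
  refine ⟨u, ?_, fun h => ?_⟩
  · rw [mem_closedBall_zero_iff, ← (inclusionInDoubleDualLi 𝕜).norm_map u]
    exact (mem_closedBall_zero_iff (E := StrongDual 𝕜 (StrongDual 𝕜 X))).1 (hu ▸ hΦ)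
  · have hΦh : Φ h = h u := by rw [← WeakDual.toStrongDual_apply, ← hu, dual_def]
    have hψh : Tendsto (fun w => ψ w h) U (𝓝 (Φ h)) :=
      ((WeakDual.eval_continuous h).tendsto Φ).comp hUΦ
    rwa [hΦh] at hψh

section

variable {X Y : Type*} [NormedAddCommGroup X] [NormedSpace ℝ X] [NormedAddCommGroup Y]
  [NormedSpace ℝ Y]

theorem BJOrth.of_apply {T A : X →L[ℝ] Y} {x : X} (hx : ‖x‖ ≤ 1) (hTx : ‖T x‖ = ‖T‖)
    (h : BJOrth (T x) (A x)) : BJOrth T A := fun t =>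
  calc ‖T‖ = ‖T x‖ := hTx.symm
    _ ≤ ‖(T + t • A) x‖ := h t
    _ ≤ ‖T + t • A‖ := by simpa using (T + t • A).le_opNorm_of_le hx

theorem isCompactOperator_smulRight (f : StrongDual ℝ X) (y : Y) :
    IsCompactOperator (f.smulRight y) :=
  (isCompactOperator_of_locallyCompactSpace_dom f).clm_comp
    (ContinuousLinearMap.toSpanSingleton ℝ y)

theorem IsCompactOperator.tendsto_of_exposes
    (hrefl : Function.Surjective (inclusionInDoubleDual ℝ X)) {T : X →L[ℝ] Y}
    (hT : IsCompactOperator T) {f : StrongDual ℝ X} {x : X}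
    (hexp : ∀ u : X, ‖u‖ ≤ 1 → u ≠ x → f u < 1) :
    Tendsto T (comap f (𝓝 1) ⊓ 𝓟 (closedBall 0 1)) (𝓝 (T x)) := by
  obtain ⟨K, hK, hTK⟩ := hT.image_closedBall_subset_compact 1
  have hball : closedBall (0 : X) 1 ∈ comap f (𝓝 1) ⊓ 𝓟 (closedBall 0 1) :=
    mem_inf_of_right (mem_principal_self _)
  refine hK.tendsto_nhds_of_unique_mapClusterPt
    (mem_of_superset hball fun w hw => hTK ⟨w, hw, rfl⟩) fun z _ hz => ?_
  obtain ⟨U, hUl, hUz⟩ := mapClusterPt_iff_ultrafilter.1 hz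
  obtain ⟨u, hu, hUu⟩ := U.exists_mem_closedBall_forall_tendsto_dual hrefl (hUl hball)
  have hfu : f u = 1 :=
    tendsto_nhds_unique (hUu f) (tendsto_comap.mono_left (hUl.trans inf_le_left))
  obtain rfl : u = x := by
    by_contra hux
    exact (hexp u (mem_closedBall_zero_iff.1 hu) hux).ne hfu
  exact SeparatingDual.eq_iff_forall_dual_eq.2 fun g =>
    tendsto_nhds_unique ((g.continuous.tendsto z).comp hUz) (hUu (g.comp T))

theorem exists_near_norming_of_bjOrth_smulRight {f : StrongDual ℝ X} (hf : ‖f‖ = 1) (x : X)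
    {y : Y} {B : X →L[ℝ] Y} (hAB : BJOrth (f.smulRight y) B) {s : ℝ} (hs0 : 0 < s)
    (hs1 : s ≤ 1) :
    ∃ w : X, ‖w‖ ≤ 1 ∧ f w ≤ 1 ∧ (1 - f w) * ‖y‖ ≤ s * (s + ‖B‖) ∧
      ‖y‖ - ‖y + B x‖ < s + ‖B w - f w • B x‖ := by
  set S := f.smulRight y + s • B
  have hyS : ‖y‖ ≤ ‖S‖ := by
    simpa [hf, ContinuousLinearMap.norm_smulRight_apply] using hAB s
  obtain ⟨u, hu, hSu⟩ := S.exists_lt_apply_of_lt_opNorm (sub_lt_self ‖S‖ (pow_pos hs0 2))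
  replace hSu : ‖y‖ - s ^ 2 < ‖S u‖ := by linarith
  obtain ⟨w, hw, hfw0, hSw⟩ : ∃ w : X, ‖w‖ ≤ 1 ∧ 0 ≤ f w ∧ ‖y‖ - s ^ 2 < ‖S w‖ := by
    rcases le_total 0 (f u) with h | h
    · exact ⟨u, hu.le, h, hSu⟩
    · exact ⟨-u, by simpa using hu.le, by simpa using h, by simpa using hSu⟩
  have hfw1 : f w ≤ 1 := by simpa [hf] using (f.le_opNorm_of_le hw).trans' (le_abs_self (f w))
  have hSw_eq : S w = f w • y + s • B w := by simp [S]
  have hupper : ‖S w‖ ≤ f w * ‖y‖ + s * ‖B‖ := by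
    rw [hSw_eq]
    refine norm_add_le_of_le (norm_smul_of_nonneg hfw0 y).le ?_
    rw [norm_smul_of_nonneg hs0.le]
    gcongr
    simpa using B.le_opNorm_of_le hw
  have hconv := norm_smul_add_smul_le y (B x) (B w) hfw0 hfw1 hs0.le hs1
  rw [← hSw_eq] at hconv
  refine ⟨w, hw, hfw1, by linarith, lt_of_mul_lt_mul_left ?_ hs0.le⟩
  linarith

theorem bjOrth_apply_of_bjOrth_smulRight
    (hrefl : Function.Surjective (inclusionInDoubleDual ℝ X)) {T : X →L[ℝ] Y}
    (hT : IsCompactOperator T) {f : StrongDual ℝ X} (hf : ‖f‖ = 1) {x : X}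
    (hexp : ∀ u : X, ‖u‖ ≤ 1 → u ≠ x → f u < 1) {y : Y} (h : BJOrth (f.smulRight y) T) :
    BJOrth y (T x) := by
  intro t
  set B := t • T
  show ‖y‖ ≤ ‖y + B x‖
  rcases (norm_nonneg y).eq_or_lt with hy | hy
  · exact hy ▸ norm_nonneg _
  set s : ℕ → ℝ := fun m => 1 / ((m : ℝ) + 1)
  have hs : Tendsto s atTop (𝓝 0) := tendsto_one_div_add_atTop_nhds_zero_nat
  have hs0 : ∀ m, 0 < s m := fun m => Nat.one_div_pos_of_nat
  have hs1 : ∀ m, s m ≤ 1 := fun m => div_le_one_of_le₀ (by simp) (by positivity)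
  choose w hw hfw1 hfw hδ using fun m =>
    exists_near_norming_of_bjOrth_smulRight hf x (h.smul_right t) (hs0 m) (hs1 m)
  have hfw_lower : ∀ m, 1 - s m * (s m + ‖B‖) / ‖y‖ ≤ f (w m) := fun m => by
    rw [sub_le_comm, le_div_iff₀ hy]; exact hfw m
  have hfw_tendsto : Tendsto (fun m => f (w m)) atTop (𝓝 1) := by
    refine tendsto_of_tendsto_of_tendsto_of_le_of_le ?_ tendsto_const_nhds hfw_lower hfw1
    simpa using tendsto_const_nhds.sub ((hs.mul (hs.add_const ‖B‖)).div_const ‖y‖)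
  have hBw : Tendsto (fun m => B (w m)) atTop (𝓝 (B x)) :=
    ((hT.smul t).tendsto_of_exposes hrefl hexp).comp <| tendsto_inf.2
      ⟨tendsto_comap_iff.2 hfw_tendsto, tendsto_principal.2 <|
        Eventually.of_forall fun m => mem_closedBall_zero_iff.2 (hw m)⟩
  have hbound : Tendsto (fun m => s m + ‖B (w m) - f (w m) • B x‖) atTop (𝓝 0) := by
    simpa using hs.add (hBw.sub (hfw_tendsto.smul_const (B x))).norm
  linarith [ge_of_tendsto' hbound fun m => (hδ m).le]

end

theorem stmt0_general {X Y : Type*} [NormedAddCommGroup X] [NormedSpace ℝ X]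
    [NormedAddCommGroup Y] [NormedSpace ℝ Y]
    (hrefl : Function.Surjective (NormedSpace.inclusionInDoubleDual ℝ X))
    (T : X →L[ℝ] Y) (hTc : IsCompactOperator T)
    (hleft : ∀ S : X →L[ℝ] Y, IsCompactOperator S → BJOrth T S → BJOrth S T) :
    ∀ x : X, (‖x‖ = 1 ∧ ‖T x‖ = ‖T‖) → ExposedPt x →
      ∀ y : Y, BJOrth (T x) y → BJOrth y (T x) := by
  rintro x ⟨hx, hTx⟩ ⟨-, f, hf, hfx, hexp⟩ y hTxy
  have hTA : BJOrth T (f.smulRight y) :=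
    BJOrth.of_apply hx.le hTx (by simpa [hfx] using hTxy)
  exact bjOrth_apply_of_bjOrth_smulRight hrefl hTc hf hexp
    (hleft _ (isCompactOperator_smulRight f y) hTA)

theorem stmt0 {X Y : Type*} [NormedAddCommGroup X] [NormedSpace ℝ X] [CompleteSpace X]
    [NormedAddCommGroup Y] [NormedSpace ℝ Y] [CompleteSpace Y]
    (hrefl : Function.Surjective (NormedSpace.inclusionInDoubleDual ℝ X))
    (hball : {x : X | ‖x‖ ≤ 1} = convexHull ℝ {x : X | ExposedPt x})
    (T : X →L[ℝ] Y) (hTc : IsCompactOperator T) (hT0 : T ≠ 0)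
    (hleft : ∀ S : X →L[ℝ] Y, IsCompactOperator S → BJOrth T S → BJOrth S T) :
    ∀ x : X, (‖x‖ = 1 ∧ ‖T x‖ = ‖T‖) → ExposedPt x →
      ∀ y : Y, BJOrth (T x) y → BJOrth y (T x) :=
  stmt0_general hrefl T hTc hleft
end
end

section
/- Let X be a reflexive strictly convex real Banach space and let Y be any real Banach space. If T : X → Y is a nonzero compact bounded linear operator that is a left symmetric point of K(X,Y) with respect to Birkhoff–James orthogonality, then Tx is a left symmetric point of Y with respect to Birkhoff–James orthogonality for every x ∈ M_T. -/
/-!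
Let `x ∈ M_T`, `T x ⊥_B y`, let `f` be a norm-one functional with `f x = 1`, and let
`S = f ⊗ y`. Then `‖T + t S‖ ≥ ‖T x + t y‖ ≥ ‖T x‖ = ‖T‖`, so `T ⊥_B S`, and left symmetry
gives `S ⊥_B T`. For compact operators on a reflexive space, `S ⊥_B T` is witnessed on `M_S`:
for every `s` some `w ∈ M_S` has `‖S w‖ ≤ ‖S w + s T w‖`. By strict convexity `f` attains `±1`
on the unit ball only at `±x`, so `M_S = {±x}` when `y ≠ 0`, and `S x = y` gives `y ⊥_B T x`.
-/

open Filter Topology Set Metric NormedSpace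

noncomputable section

section Reflexive

variable {𝕜 X Y ι : Type*} [RCLike 𝕜] [NormedAddCommGroup X] [NormedSpace 𝕜 X]
  [NormedAddCommGroup Y] [NormedSpace 𝕜 Y]

/-- Banach–Alaoglu in the bidual, pulled back to `X` by reflexivity. -/
theorem exists_forall_tendsto_dual_of_norm_le_one
    (hrefl : Function.Surjective (inclusionInDoubleDual 𝕜 X))
    (𝒰 : Ultrafilter ι) (u : ι → X) (hu : ∀ i, ‖u i‖ ≤ 1) :
    ∃ w : X, ‖w‖ ≤ 1 ∧
      ∀ f : StrongDual 𝕜 X, Tendsto (fun i => f (u i)) 𝒰 (𝓝 (f w)) := by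
  let J : X → WeakDual 𝕜 (StrongDual 𝕜 X) := StrongDual.toWeakDual ∘ inclusionInDoubleDual 𝕜 X
  have hJ : ∀ v, ‖inclusionInDoubleDual 𝕜 X v‖ = ‖v‖ := (inclusionInDoubleDualLi 𝕜).norm_map
  have hball : WeakDual.toStrongDual ⁻¹' closedBall 0 1 ∈ 𝒰.map (J ∘ u) :=
    mem_map.mpr <| univ_mem' fun i =>
      (dist_zero_right (inclusionInDoubleDual 𝕜 X (u i))).trans_le ((hJ _).trans_le (hu i))
  obtain ⟨φ, hφ, hlim⟩ :=
    (WeakDual.isCompact_closedBall (0 : StrongDual 𝕜 (StrongDual 𝕜 X)) 1).ultrafilter_le_nhds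
      _ (le_principal_iff.mpr hball)
  obtain ⟨w, rfl⟩ := hrefl (WeakDual.toStrongDual φ)
  exact ⟨w, (hJ w).symm.trans_le ((dist_zero_right _).symm.trans_le hφ),
    fun f => ((WeakDual.eval_continuous f).tendsto _).comp hlim⟩

theorem IsCompactOperator.tendsto_apply_of_forall_tendsto_dual {A : X →L[𝕜] Y}
    (hA : IsCompactOperator A) (𝒰 : Ultrafilter ι) {u : ι → X} (hu : ∀ i, ‖u i‖ ≤ 1) {w : X}
    (hw : ∀ f : StrongDual 𝕜 X, Tendsto (fun i => f (u i)) 𝒰 (𝓝 (f w))) :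
    Tendsto (fun i => A (u i)) 𝒰 (𝓝 (A w)) := by
  obtain ⟨K, hK, hAK⟩ := hA.image_closedBall_subset_compact (𝕜₁ := 𝕜) 1
  have hmem : K ∈ 𝒰.map (A ∘ u) :=
    mem_map.mpr <| univ_mem' fun i => hAK ⟨u i, by simpa using hu i, rfl⟩
  obtain ⟨v, -, hv⟩ := hK.ultrafilter_le_nhds _ (le_principal_iff.mpr hmem)
  -- `v` and `A w` agree on every `g ∈ Y*`, because `g ∘ A ∈ X*`.
  have hvw : v = A w := SeparatingDual.eq_iff_forall_dual_eq.mpr fun g =>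
    tendsto_nhds_unique (((g.continuous.tendsto v).comp hv)) (hw (g.comp A))
  exact hvw ▸ hv

theorem IsCompactOperator.exists_norm_apply_eq_opNorm
    (hrefl : Function.Surjective (inclusionInDoubleDual 𝕜 X)) {A : X →L[𝕜] Y}
    (hA : IsCompactOperator A) : ∃ w : X, ‖w‖ ≤ 1 ∧ ‖A w‖ = ‖A‖ := by
  have hseq : ∀ n : ℕ, ∃ v : X, ‖v‖ < 1 ∧ ‖A‖ - 1 / (n + 1) < ‖A v‖ := fun n =>
    A.exists_lt_apply_of_lt_opNorm (sub_lt_self _ Nat.one_div_pos_of_nat)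
  choose u hu hAu using hseq
  have hnorm : Tendsto (fun n => ‖A (u n)‖) atTop (𝓝 ‖A‖) :=
    tendsto_of_tendsto_of_tendsto_of_le_of_le
      (by simpa using tendsto_const_nhds.sub (tendsto_one_div_add_atTop_nhds_zero_nat (𝕜 := ℝ)))
      tendsto_const_nhds (fun n => (hAu n).le) (fun n => A.unit_le_opNorm _ (hu n).le)
  let 𝒰 := Ultrafilter.of (atTop : Filter ℕ)
  obtain ⟨w, hw, hlim⟩ :=
    exists_forall_tendsto_dual_of_norm_le_one hrefl 𝒰 u fun n => (hu n).le
  have hAw := hA.tendsto_apply_of_forall_tendsto_dual 𝒰 (fun n => (hu n).le) hlim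
  exact ⟨w, hw, tendsto_nhds_unique hAw.norm (hnorm.mono_left (Ultrafilter.of_le _))⟩

end Reflexive

-- Convexity of `t ↦ ‖a + t • b‖`.
theorem norm_le_norm_add_smul_of_norm_le_norm_add_mul_smul {E : Type*}
    [SeminormedAddCommGroup E] [NormedSpace ℝ E] {a b : E} {r s : ℝ} (hr₀ : 0 < r)
    (hr₁ : r ≤ 1) (h : ‖a‖ ≤ ‖a + (r * s) • b‖) : ‖a‖ ≤ ‖a + s • b‖ := by
  have hconv : ‖a + (r * s) • b‖ ≤ (1 - r) * ‖a‖ + r * ‖a + s • b‖ := calc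
    ‖a + (r * s) • b‖ = ‖(1 - r) • a + r • (a + s • b)‖ := by congr 1; module
    _ ≤ ‖(1 - r) • a‖ + ‖r • (a + s • b)‖ := norm_add_le _ _
    _ = (1 - r) * ‖a‖ + r * ‖a + s • b‖ := by
      rw [norm_smul_of_nonneg (by linarith), norm_smul_of_nonneg hr₀.le]
  nlinarith

theorem eq_of_norm_le_one_of_dual_apply_eq_one {E : Type*} [NormedAddCommGroup E]
    [NormedSpace ℝ E] [StrictConvexSpace ℝ E] {f : StrongDual ℝ E} (hf : ‖f‖ ≤ 1) {x v : E}
    (hx : ‖x‖ ≤ 1) (hv : ‖v‖ ≤ 1) (hfx : f x = 1) (hfv : f v = 1) : v = x := by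
  by_contra hne
  have hlt := norm_combo_lt_of_ne hv hx hne one_half_pos one_half_pos (add_halves 1)
  have hmid : f ((1 / 2 : ℝ) • v + (1 / 2 : ℝ) • x) = 1 := by
    rw [map_add, map_smul, map_smul, hfx, hfv]; norm_num
  have hle : f ((1 / 2 : ℝ) • v + (1 / 2 : ℝ) • x) ≤ ‖(1 / 2 : ℝ) • v + (1 / 2 : ℝ) • x‖ :=
    (Real.le_norm_self _).trans ((f.le_opNorm _).trans (mul_le_of_le_one_left (norm_nonneg _) hf))
  linarith

section Orthogonality

variable {X Y : Type*} [NormedAddCommGroup X] [NormedSpace ℝ X]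
  [NormedAddCommGroup Y] [NormedSpace ℝ Y]

/-- The perturbations `S + (r s) • T`, `r ↓ 0`, attain their norms at points whose weak cluster
point `w` norms `S`; convexity of the norm along `S w + t • T w` passes to the limit. -/
theorem IsCompactOperator.exists_norm_apply_eq_opNorm_and_norm_le_norm_add_smul
    (hrefl : Function.Surjective (inclusionInDoubleDual ℝ X)) {S T : X →L[ℝ] Y}
    (hS : IsCompactOperator S) (hT : IsCompactOperator T) (hST : BJOrth S T) (s : ℝ) :
    ∃ w : X, ‖w‖ ≤ 1 ∧ ‖S w‖ = ‖S‖ ∧ ‖S w‖ ≤ ‖S w + s • T w‖ := by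
  have hattain (r : ℝ) : ∃ v : X, ‖v‖ ≤ 1 ∧ ‖(S + (r * s) • T) v‖ = ‖S + (r * s) • T‖ :=
    IsCompactOperator.exists_norm_apply_eq_opNorm (A := S + (r * s) • T) hrefl
      (hS.add (hT.smul (r * s)))
  choose u hu hSu using hattain
  have hle (r : ℝ) : ‖S‖ ≤ ‖S (u r) + (r * s) • T (u r)‖ := by
    simpa using (hST (r * s)).trans_eq (hSu r).symm
  let 𝒰 := Ultrafilter.of (𝓝[>] (0 : ℝ))
  have h𝒰 : (𝒰 : Filter ℝ) ≤ 𝓝[>] 0 := Ultrafilter.of_le _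
  obtain ⟨w, hw, hlim⟩ := exists_forall_tendsto_dual_of_norm_le_one hrefl 𝒰 u hu
  have hSw := hS.tendsto_apply_of_forall_tendsto_dual 𝒰 hu hlim
  have hTw := hT.tendsto_apply_of_forall_tendsto_dual 𝒰 hu hlim
  have hrs : Tendsto (fun r : ℝ => r * s) 𝒰 (𝓝 0) := by
    simpa using ((continuous_mul_const s).tendsto 0).mono_left (h𝒰.trans nhdsWithin_le_nhds)
  have hpert : Tendsto (fun r => ‖S (u r) + (r * s) • T (u r)‖) 𝒰 (𝓝 ‖S w‖) := by
    simpa using (hSw.add (hrs.smul hTw)).norm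
  refine ⟨w, hw, le_antisymm (S.unit_le_opNorm w hw) (ge_of_tendsto' hpert hle),
    le_of_tendsto_of_tendsto hSw.norm (hSw.add (hTw.const_smul s)).norm ?_⟩
  filter_upwards [h𝒰 (Ioc_mem_nhdsGT zero_lt_one)] with r hr
  exact norm_le_norm_add_smul_of_norm_le_norm_add_mul_smul hr.1 hr.2
    ((S.unit_le_opNorm _ (hu r)).trans (hle r))

end Orthogonality

theorem stmt2_general {X Y : Type*} [NormedAddCommGroup X] [NormedSpace ℝ X]
    [StrictConvexSpace ℝ X]
    [NormedAddCommGroup Y] [NormedSpace ℝ Y]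
    (hrefl : Function.Surjective (NormedSpace.inclusionInDoubleDual ℝ X))
    (T : X →L[ℝ] Y) (hTc : IsCompactOperator T)
    (hleft : ∀ S : X →L[ℝ] Y, IsCompactOperator S → BJOrth T S → BJOrth S T) :
    ∀ x : X, (‖x‖ = 1 ∧ ‖T x‖ = ‖T‖) →
      ∀ y : Y, BJOrth (T x) y → BJOrth y (T x) := by
  rintro x ⟨hx, hTx⟩ y hxy t
  rcases eq_or_ne y 0 with rfl | hy
  · simp
  obtain ⟨f, hf, hfx⟩ := exists_dual_vector ℝ x (by simp [hx])
  rw [hx, RCLike.ofReal_one] at hfx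
  let S : X →L[ℝ] Y := f.smulRight y
  have hSc : IsCompactOperator S :=
    (isCompactOperator_of_locallyCompactSpace_dom f).continuous_comp
      (continuous_id.smul continuous_const)
  have hTS : BJOrth T S := fun t => calc
    ‖T‖ = ‖T x‖ := hTx.symm
    _ ≤ ‖T x + t • y‖ := hxy t
    _ = ‖(T + t • S) x‖ := by simp [S, hfx]
    _ ≤ ‖T + t • S‖ := (T + t • S).unit_le_opNorm x hx.le
  obtain ⟨w, hw, hSw, hwt⟩ :=
    hSc.exists_norm_apply_eq_opNorm_and_norm_le_norm_add_smul hrefl hTc (hleft S hSc hTS) t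
  have hfw : |f w| = 1 := by
    simpa [S, norm_smul, ContinuousLinearMap.norm_smulRight_apply, hf, hy] using hSw
  rcases abs_eq zero_le_one |>.mp hfw with hfw | hfw
  · obtain rfl := eq_of_norm_le_one_of_dual_apply_eq_one hf.le hx.le hw hfx hfw
    simpa [S, hfx] using hwt
  · obtain rfl : -w = x :=
      eq_of_norm_le_one_of_dual_apply_eq_one hf.le hx.le (by rwa [norm_neg]) hfx (by simp [hfw])
    rw [← norm_neg (_ + _)] at hwt
    simpa [S, hfw, add_comm] using hwt

theorem stmt2 {X Y : Type*} [NormedAddCommGroup X] [NormedSpace ℝ X] [CompleteSpace X]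
    [StrictConvexSpace ℝ X]
    [NormedAddCommGroup Y] [NormedSpace ℝ Y] [CompleteSpace Y]
    (hrefl : Function.Surjective (NormedSpace.inclusionInDoubleDual ℝ X))
    (T : X →L[ℝ] Y) (hTc : IsCompactOperator T) (hT0 : T ≠ 0)
    (hleft : ∀ S : X →L[ℝ] Y, IsCompactOperator S → BJOrth T S → BJOrth S T) :
    ∀ x : X, (‖x‖ = 1 ∧ ‖T x‖ = ‖T‖) →
      ∀ y : Y, BJOrth (T x) y → BJOrth y (T x) :=
  stmt2_general hrefl T hTc hleft
end
end

section
/- Let K be a compact Hausdorff space and let f, g ∈ C(K) be real-valued continuous functions. Set Ω = { sgn(f(k))·g(k) : k ∈ K, |f(k)| = ‖f‖ }. Then (i) f ⊥_{ρ₊} g if and only if sup Ω = 0; (ii) f ⊥_{ρ₋} g if and only if inf Ω = 0; (iii) f ⊥_ρ g if and only if sup Ω + inf Ω = 0, where the orthogonalities are taken in the Banach space C(K) with the supremum norm. -/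
open Filter Topology Set Metric NormedSpace

noncomputable section

lemma abs_sign_le (x : ℝ) : |Real.sign x| ≤ 1 := by
  rcases lt_trichotomy x 0 with h | h | h
  · rw [Real.sign_of_neg h]; norm_num
  · simp [h]
  · rw [Real.sign_of_pos h]; norm_num

lemma rsign_mul_self (x : ℝ) : Real.sign x * x = |x| := by
  rcases lt_trichotomy x 0 with h | h | h
  · rw [Real.sign_of_neg h, abs_of_neg h]; ring
  · simp [h]
  · rw [Real.sign_of_pos h, abs_of_pos h]; ring

lemma key {K : Type*} [TopologicalSpace K] [CompactSpace K]
    (f g : C(K, ℝ)) (hf : f ≠ 0) :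
    Tendsto (fun t => (‖f + t • g‖ - ‖f‖) / t) (𝓝[>] (0:ℝ))
      (𝓝 (sSup {r : ℝ | ∃ k : K, |f k| = ‖f‖ ∧ r = Real.sign (f k) * g k})) := by
  set Ω : Set ℝ := {r : ℝ | ∃ k : K, |f k| = ‖f‖ ∧ r = Real.sign (f k) * g k} with hΩ
  have hMpos : (0:ℝ) < ‖f‖ := norm_pos_iff.mpr hf
  have hK : Nonempty K := by
    by_contra h
    rw [not_nonempty_iff] at h
    exact hf (by ext k; exact isEmptyElim k)
  -- norm attained
  obtain ⟨k₀, hk₀⟩ : ∃ k₀ : K, ∀ k : K, |f k| ≤ |f k₀| := by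
    obtain ⟨k₀, -, h⟩ := isCompact_univ.exists_isMaxOn univ_nonempty
      (f.continuous.abs.continuousOn (s := univ))
    exact ⟨k₀, fun k => h (mem_univ k)⟩
  have hnorm : ∀ k : K, |f k| ≤ ‖f‖ := fun k => f.norm_coe_le_norm k
  have hk₀n : |f k₀| = ‖f‖ := le_antisymm (hnorm k₀)
    ((f.norm_le (abs_nonneg _)).mpr hk₀)
  have hΩne : Ω.Nonempty := ⟨Real.sign (f k₀) * g k₀, k₀, hk₀n, rfl⟩
  have hΩbdd : ∀ r ∈ Ω, r ≤ ‖g‖ := by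
    rintro r ⟨k, -, rfl⟩
    calc Real.sign (f k) * g k ≤ |Real.sign (f k) * g k| := le_abs_self _
    _ = |Real.sign (f k)| * |g k| := abs_mul _ _
    _ ≤ 1 * ‖g‖ := mul_le_mul (abs_sign_le _) (g.norm_coe_le_norm k) (abs_nonneg _) zero_le_one
    _ = ‖g‖ := one_mul _
  have hbddA : BddAbove Ω := ⟨‖g‖, hΩbdd⟩
  set S := sSup Ω with hS
  -- lower bound
  have hlow : ∀ t : ℝ, 0 < t → S ≤ (‖f + t • g‖ - ‖f‖) / t := by
    intro t ht
    apply csSup_le hΩne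
    rintro r ⟨k, hk, rfl⟩
    rw [le_div_iff₀ ht]
    have h1 : ‖f‖ + Real.sign (f k) * g k * t ≤ |(f + t • g) k| := by
      have : |(f + t • g) k| = |f k + t * g k| := by simp
      rw [this]
      calc ‖f‖ + Real.sign (f k) * g k * t
          = Real.sign (f k) * (f k + t * g k) := by
            rw [mul_add, rsign_mul_self, hk]; ring
        _ ≤ |Real.sign (f k) * (f k + t * g k)| := le_abs_self _
        _ = |Real.sign (f k)| * |f k + t * g k| := abs_mul _ _
        _ ≤ 1 * |f k + t * g k| := by
            apply mul_le_mul_of_nonneg_right (abs_sign_le _) (abs_nonneg _)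
        _ = |f k + t * g k| := one_mul _
    have h2 : |(f + t • g) k| ≤ ‖f + t • g‖ := (f + t • g).norm_coe_le_norm k
    linarith
  -- upper bound, eventually
  have hup : ∀ ε : ℝ, 0 < ε → ∀ᶠ t in 𝓝[>] (0:ℝ), (‖f + t • g‖ - ‖f‖) / t ≤ S + ε := by
    intro ε hε
    set U : Set K := (f ⁻¹' Ioi 0 ∩ g ⁻¹' Iio (S + ε)) ∪
        (f ⁻¹' Iio 0 ∩ g ⁻¹' Ioi (-(S + ε))) with hU
    have hUopen : IsOpen U := by
      apply IsOpen.union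
      · exact ((isOpen_Ioi.preimage f.continuous).inter (isOpen_Iio.preimage g.continuous))
      · exact ((isOpen_Iio.preimage f.continuous).inter (isOpen_Ioi.preimage g.continuous))
    have hMU : ∀ k : K, |f k| = ‖f‖ → k ∈ U := by
      intro k hk
      have hfk : f k ≠ 0 := by
        intro h; rw [h] at hk; simp at hk; exact hMpos.ne' hk.symm
      have hmem : Real.sign (f k) * g k ≤ S := le_csSup hbddA ⟨k, hk, rfl⟩
      rcases hfk.lt_or_gt with h | h
      · right
        constructor
        · exact h
        · rw [Real.sign_of_neg h] at hmem
          simp only [mem_preimage, mem_Ioi]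
          linarith
      · left
        constructor
        · exact h
        · rw [Real.sign_of_pos h, one_mul] at hmem
          simp only [mem_preimage, mem_Iio]
          linarith
    -- get bound m on complement
    obtain ⟨m, hm, hmC⟩ : ∃ m : ℝ, m < ‖f‖ ∧ ∀ k : K, k ∉ U → |f k| ≤ m := by
      rcases eq_empty_or_nonempty Uᶜ with hC | hC
      · exact ⟨0, hMpos, fun k hk => (eq_empty_iff_forall_notMem.mp hC k hk).elim⟩
      · obtain ⟨k₁, hk₁C, hk₁⟩ := (hUopen.isClosed_compl.isCompact).exists_isMaxOn hC
          (f.continuous.abs.continuousOn)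
        refine ⟨|f k₁|, ?_, fun k hk => hk₁ hk⟩
        rcases lt_or_eq_of_le (hnorm k₁) with h | h
        · exact h
        · exact absurd (hMU k₁ h) hk₁C
    set D : ℝ := ‖g‖ + |S + ε| + 1 with hD
    have hDpos : 0 < D := by positivity
    set δ : ℝ := min (‖f‖ / D) ((‖f‖ - m) / D) with hδ
    have hδpos : 0 < δ := lt_min (div_pos hMpos hDpos) (div_pos (by linarith) hDpos)
    filter_upwards [Ioo_mem_nhdsGT_of_mem (Set.mem_Ico.mpr ⟨le_refl 0, hδpos⟩)] with t ht
    obtain ⟨ht0, htδ⟩ := ht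
    have htD1 : t * D ≤ ‖f‖ := by
      have : t ≤ ‖f‖ / D := le_of_lt (lt_of_lt_of_le htδ (min_le_left _ _))
      calc t * D ≤ (‖f‖ / D) * D := by nlinarith
        _ = ‖f‖ := by field_simp
    have htD2 : t * D ≤ ‖f‖ - m := by
      have : t ≤ (‖f‖ - m) / D := le_of_lt (lt_of_lt_of_le htδ (min_le_right _ _))
      calc t * D ≤ ((‖f‖ - m) / D) * D := by nlinarith
        _ = ‖f‖ - m := by field_simp
    have hgb : t * ‖g‖ ≤ ‖f‖ + t * (S + ε) := by
      have h1 : t * ‖g‖ - t * (S + ε) ≤ t * D := by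
        have : ‖g‖ - (S + ε) ≤ D := by
          have := le_abs_self (S + ε); have := neg_abs_le (S + ε); simp only [hD]; linarith
        nlinarith
      linarith
    have hbound : ∀ k : K, |f k + t * g k| ≤ ‖f‖ + t * (S + ε) := by
      intro k
      have hgk : |g k| ≤ ‖g‖ := g.norm_coe_le_norm k
      by_cases hk : k ∈ U
      · rcases hk with ⟨h1, h2⟩ | ⟨h1, h2⟩
        · simp only [mem_preimage, mem_Ioi, mem_Iio] at h1 h2
          rw [abs_le]
          constructor
          · have : -(t * ‖g‖) ≤ t * g k := by nlinarith [neg_abs_le (g k)]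
            nlinarith
          · nlinarith [hnorm k, le_abs_self (f k)]
        · simp only [mem_preimage, mem_Ioi, mem_Iio] at h1 h2
          rw [abs_le]
          constructor
          · nlinarith [hnorm k, neg_abs_le (f k)]
          · have : t * g k ≤ t * ‖g‖ := by nlinarith [le_abs_self (g k)]
            nlinarith
      · have := hmC k hk
        calc |f k + t * g k| ≤ |f k| + |t * g k| := abs_add_le _ _
          _ ≤ m + t * ‖g‖ := by
              rw [abs_mul, abs_of_pos ht0]
              exact add_le_add this (by nlinarith)
          _ ≤ ‖f‖ + t * (S + ε) := by
              have : t * ‖g‖ - t * (S + ε) ≤ t * D := by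
                have : ‖g‖ - (S + ε) ≤ D := by
                  have := neg_abs_le (S + ε); simp only [hD]; linarith
                nlinarith
              linarith
    have hnle : ‖f + t • g‖ ≤ ‖f‖ + t * (S + ε) := by
      have hnn : 0 ≤ ‖f‖ + t * (S + ε) := le_trans (abs_nonneg _) (hbound (Classical.arbitrary K))
      rw [ContinuousMap.norm_le _ hnn]
      intro k
      have : (f + t • g) k = f k + t * g k := by simp
      rw [Real.norm_eq_abs, this]
      exact hbound k
    rw [div_le_iff₀ ht0]
    linarith
  -- combine
  rw [tendsto_order]
  constructor
  · intro a ha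
    filter_upwards [self_mem_nhdsWithin] with t ht
    exact lt_of_lt_of_le ha (hlow t ht)
  · intro b hb
    have hε : 0 < (b - S) / 2 := by linarith
    filter_upwards [hup _ hε] with t ht
    linarith

lemma keyMinus {K : Type*} [TopologicalSpace K] [CompactSpace K]
    (f g : C(K, ℝ)) (hf : f ≠ 0) :
    Tendsto (fun t => (‖f + t • g‖ - ‖f‖) / t) (𝓝[<] (0:ℝ))
      (𝓝 (sInf {r : ℝ | ∃ k : K, |f k| = ‖f‖ ∧ r = Real.sign (f k) * g k})) := by
  set Ω : Set ℝ := {r : ℝ | ∃ k : K, |f k| = ‖f‖ ∧ r = Real.sign (f k) * g k} with hΩ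
  have hneg : {r : ℝ | ∃ k : K, |f k| = ‖f‖ ∧ r = Real.sign (f k) * (-g) k} = -Ω := by
    ext r
    simp only [Set.mem_neg, hΩ, mem_setOf_eq, ContinuousMap.neg_apply]
    constructor
    · rintro ⟨k, hk, rfl⟩; exact ⟨k, hk, by ring⟩
    · rintro ⟨k, hk, h⟩; exact ⟨k, hk, by linarith⟩
  have hplus := key f (-g) hf
  rw [hneg] at hplus
  have hnegmap : Tendsto (fun t : ℝ => -t) (𝓝[<] (0:ℝ)) (𝓝[>] (0:ℝ)) := by
    rw [tendsto_nhdsWithin_iff]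
    constructor
    · exact (continuous_neg.tendsto' 0 0 (by norm_num)).mono_left nhdsWithin_le_nhds
    · filter_upwards [self_mem_nhdsWithin] with t ht
      simp only [mem_Ioi]
      simpa using ht
  have h2 := (hplus.comp hnegmap).neg
  have heq : (fun t : ℝ => -((fun s => (‖f + s • (-g)‖ - ‖f‖) / s) (-t)))
      = fun t : ℝ => (‖f + t • g‖ - ‖f‖) / t := by
    funext t
    have : (-t) • (-g) = t • g := by rw [smul_neg, neg_smul, neg_neg]
    simp only [this, div_neg, neg_neg]
  have h3 : -sSup (-Ω) = sInf Ω := (Real.sInf_def Ω).symm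
  rw [← h3]
  rw [← heq]
  exact h2


theorem stmt6 {K : Type*} [TopologicalSpace K] [CompactSpace K] [T2Space K]
    (f g : C(K, ℝ)) (Ω : Set ℝ)
    (hΩ : Ω = {r : ℝ | ∃ k : K, |f k| = ‖f‖ ∧ r = Real.sign (f k) * g k}) :
    (rhoPlus f g = 0 ↔ sSup Ω = 0) ∧ (rhoMinus f g = 0 ↔ sInf Ω = 0) ∧
      (rhoDer f g = 0 ↔ sSup Ω + sInf Ω = 0) := by
  rcases eq_or_ne f 0 with hf | hf
  · have hsub : Ω ⊆ {0} := by
      rw [hΩ]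
      rintro r ⟨k, -, rfl⟩
      have : f k = 0 := by rw [hf]; rfl
      simp [this]
    have hS : sSup Ω = 0 := by
      rcases eq_empty_or_nonempty Ω with h | h
      · rw [h]; exact Real.sSup_empty
      · rw [(subset_singleton_iff_eq.mp hsub).resolve_left h.ne_empty]
        exact csSup_singleton 0
    have hI : sInf Ω = 0 := by
      rcases eq_empty_or_nonempty Ω with h | h
      · rw [h]; exact Real.sInf_empty
      · rw [(subset_singleton_iff_eq.mp hsub).resolve_left h.ne_empty]
        exact csInf_singleton 0
    have hp : rhoPlus f g = 0 := by simp [rhoPlus, hf]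
    have hm : rhoMinus f g = 0 := by simp [rhoMinus, hf]
    have hd : rhoDer f g = 0 := by simp [rhoDer, hp, hm]
    simp [hp, hm, hd, hS, hI]
  · have hfn : ‖f‖ ≠ 0 := norm_ne_zero_iff.mpr hf
    have hp : rhoPlus f g = ‖f‖ * sSup Ω := by
      rw [rhoPlus, (key f g hf).limUnder_eq, hΩ]
    have hm : rhoMinus f g = ‖f‖ * sInf Ω := by
      rw [rhoMinus, (keyMinus f g hf).limUnder_eq, hΩ]
    refine ⟨?_, ?_, ?_⟩
    · rw [hp, mul_eq_zero]; simp [hfn]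
    · rw [hm, mul_eq_zero]; simp [hfn]
    · rw [rhoDer, hp, hm, div_eq_zero_iff, ← mul_add, mul_eq_zero]
      simp [hfn]
end
end

section
/- Let K be a compact Hausdorff space, X a real Banach space, and let f ∈ C(K,X) with ‖f‖ = 1. For any g ∈ C(K,X): (i) if f ⊥_{ρ₊} g in C(K,X), then there exists k₀ ∈ M_f such that f(k₀) ⊥_{ρ₊} g(k₀) in X; (ii) if f ⊥_{ρ₋} g in C(K,X), then there exists k₀ ∈ M_f such that f(k₀) ⊥_{ρ₋} g(k₀) in X. -/
/-!
`ρ'₊(x, y)` is `‖x‖` times the right derivative at `0` of the convex function `t ↦ ‖x + t • y‖`,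
which is the infimum of its difference quotients, and `ρ'₋(x, y) = -ρ'₊(x, -y)`. For `f, g` in
`C(K, X)` the right derivative of `t ↦ ‖f + t • g‖ = sup_k ‖f k + t • g k‖` is, as in Danskin's
theorem, the maximum over `k ∈ M_f` of the pointwise right derivatives; in particular
`ρ'₊(f, g) = ρ'₊(f k₀, g k₀)` for some `k₀ ∈ M_f`, which gives both parts.
-/

open Filter Topology Set Metric NormedSpace

noncomputable section

section NormDerivative

variable {E : Type*} [NormedAddCommGroup E] [NormedSpace ℝ E]

def normRightDeriv (x y : E) : ℝ :=
  derivWithin (fun t : ℝ => ‖x + t • y‖) (Ioi 0) 0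

lemma convexOn_norm_add_smul (x y : E) : ConvexOn ℝ univ (fun t : ℝ => ‖x + t • y‖) := by
  have h := convexOn_univ_norm.comp_affineMap (AffineMap.lineMap x (x + y) : ℝ →ᵃ[ℝ] E)
  simpa [Function.comp_def, AffineMap.lineMap_apply, add_comm] using h

lemma slope_norm_add_smul (x y : E) :
    slope (fun t : ℝ => ‖x + t • y‖) 0 = fun t => (‖x + t • y‖ - ‖x‖) / t := by
  ext t
  simp [slope_def_field]

lemma tendsto_normRightDeriv (x y : E) :
    Tendsto (fun t : ℝ => (‖x + t • y‖ - ‖x‖) / t) (𝓝[>] 0) (𝓝 (normRightDeriv x y)) := by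
  have h := ((convexOn_norm_add_smul x y).hasDerivWithinAt_rightDeriv_of_mem_interior
    (by simp : (0 : ℝ) ∈ interior univ))
  rw [hasDerivWithinAt_iff_tendsto_slope' self_notMem_Ioi] at h
  rwa [slope_norm_add_smul] at h

lemma normRightDeriv_le (x y : E) {t : ℝ} (ht : 0 < t) :
    normRightDeriv x y ≤ (‖x + t • y‖ - ‖x‖) / t := by
  have h := (convexOn_norm_add_smul x y).rightDeriv_le_slope_of_mem_interior
    (by simp : (0 : ℝ) ∈ interior univ) (mem_univ t) ht
  rwa [slope_norm_add_smul] at h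

lemma le_normRightDeriv (x y : E) {c : ℝ} (h : ∀ t > 0, c ≤ (‖x + t • y‖ - ‖x‖) / t) :
    c ≤ normRightDeriv x y :=
  ge_of_tendsto (tendsto_normRightDeriv x y) (eventually_nhdsWithin_of_forall h)

lemma rhoPlus_eq (x y : E) : rhoPlus x y = ‖x‖ * normRightDeriv x y := by
  rw [rhoPlus, (tendsto_normRightDeriv x y).limUnder_eq]

lemma rhoMinus_eq_neg_rhoPlus_neg (x y : E) : rhoMinus x y = -rhoPlus x (-y) := by
  have hneg : Tendsto (fun t : ℝ => -t) (𝓝[<] 0) (𝓝[>] 0) := by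
    simpa using tendsto_neg_nhdsLT (a := (0 : ℝ))
  have h : Tendsto (fun t : ℝ => (‖x + t • y‖ - ‖x‖) / t) (𝓝[<] 0)
      (𝓝 (-normRightDeriv x (-y))) := by
    convert ((tendsto_normRightDeriv x (-y)).comp hneg).neg using 2 with t
    simp [div_neg]
  rw [rhoMinus, h.limUnder_eq, rhoPlus_eq, mul_neg]

lemma add_mul_le_norm_add_smul_of_le {x y : E} {a r s t : ℝ} (ha : ‖x‖ ≤ a) (hs : 0 < s)
    (hst : s ≤ t) (h : a + s * r ≤ ‖x + s • y‖) : a + t * r ≤ ‖x + t • y‖ := by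
  have ht : 0 < t := hs.trans_le hst
  have hmono := (convexOn_norm_add_smul x y).secant_mono (mem_univ 0) (mem_univ s) (mem_univ t)
    hs.ne' ht.ne' hst
  simp only [zero_smul, add_zero, sub_zero] at hmono
  rw [div_le_div_iff₀ hs ht] at hmono
  nlinarith [mul_le_mul_of_nonneg_left hst (sub_nonneg.mpr ha)]

end NormDerivative

section ContinuousMap

variable {K X : Type*} [TopologicalSpace K] [NormedAddCommGroup X] [NormedSpace ℝ X]

lemma normRightDeriv_apply_le [CompactSpace K] {f : C(K, X)} (g : C(K, X)) {k : K}
    (hk : ‖f k‖ = ‖f‖) : normRightDeriv (f k) (g k) ≤ normRightDeriv f g :=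
  le_normRightDeriv _ _ fun t ht => (normRightDeriv_le _ _ ht).trans <| by
    rw [hk]
    gcongr
    simpa using (f + t • g).norm_coe_le_norm k

/-- The sets `{k | ‖f‖ + t * r ≤ ‖f k + t • g k‖}`, `t > 0`, are nonempty (take `k` maximizing
`‖f k + t • g k‖`), closed and, by convexity, increase with `t`; a point of their intersection
attains the norm of `f`. -/
lemma exists_norm_apply_eq_and_normRightDeriv_le [CompactSpace K] [Nonempty K]
    (f g : C(K, X)) : ∃ k, ‖f k‖ = ‖f‖ ∧ normRightDeriv f g ≤ normRightDeriv (f k) (g k) := by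
  set r := normRightDeriv f g
  let A : Ioi (0 : ℝ) → Set K := fun t => {k | ‖f‖ + t * r ≤ ‖f k + (t : ℝ) • g k‖}
  have hA_mono : Monotone A := fun s t hst k hk =>
    add_mul_le_norm_add_smul_of_le (f.norm_coe_le_norm k) s.2 hst hk
  have hA_nonempty (t : Ioi (0 : ℝ)) : (A t).Nonempty := by
    obtain ⟨k, -, hk⟩ := isCompact_univ.exists_isMaxOn univ_nonempty
      (f + (t : ℝ) • g).continuous.norm.continuousOn
    refine ⟨k, ?_⟩
    have hnorm : ‖f + (t : ℝ) • g‖ ≤ ‖f k + (t : ℝ) • g k‖ :=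
      (ContinuousMap.norm_le _ (norm_nonneg _)).mpr fun j => by simpa using hk (mem_univ j)
    have hr := normRightDeriv_le f g t.2
    rw [le_div_iff₀ t.2] at hr
    simp only [A, mem_ofPred_eq]
    linarith
  have hA_closed (t : Ioi (0 : ℝ)) : IsClosed (A t) :=
    isClosed_le continuous_const (f.continuous.add (continuous_const.smul g.continuous)).norm
  obtain ⟨k, hk⟩ := IsCompact.nonempty_iInter_of_directed_nonempty_isCompact_isClosed A
    hA_mono.directed_ge hA_nonempty (fun t => (hA_closed t).isCompact) hA_closed
  have hk (t : ℝ) (ht : 0 < t) : ‖f‖ + t * r ≤ ‖f k + t • g k‖ := mem_iInter.mp hk ⟨t, ht⟩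
  have hlim : Tendsto (fun t : ℝ => ‖f k + t • g k‖ - t * r) (𝓝[>] 0) (𝓝 ‖f k‖) := by
    have hcont : Continuous fun t : ℝ => ‖f k + t • g k‖ - t * r := by fun_prop
    simpa using (hcont.tendsto 0).mono_left nhdsWithin_le_nhds
  have hfk : ‖f k‖ = ‖f‖ := le_antisymm (f.norm_coe_le_norm k) <| ge_of_tendsto hlim <|
    eventually_nhdsWithin_of_forall fun t ht => le_sub_iff_add_le.mpr (hk t ht)
  refine ⟨k, hfk, le_normRightDeriv _ _ fun t ht => ?_⟩
  rw [le_div_iff₀ ht, hfk]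
  linarith [hk t ht]

lemma exists_norm_apply_eq_and_rhoPlus_eq [CompactSpace K] [Nonempty K] (f g : C(K, X)) :
    ∃ k, ‖f k‖ = ‖f‖ ∧ rhoPlus (f k) (g k) = rhoPlus f g := by
  obtain ⟨k, hk, hle⟩ := exists_norm_apply_eq_and_normRightDeriv_le f g
  refine ⟨k, hk, ?_⟩
  rw [rhoPlus_eq, rhoPlus_eq, hk, le_antisymm (normRightDeriv_apply_le g hk) hle]

end ContinuousMap

theorem stmt7_general {K X : Type*} [TopologicalSpace K] [CompactSpace K]
    [NormedAddCommGroup X] [NormedSpace ℝ X]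
    (f : C(K, X)) (hf : ‖f‖ = 1) (g : C(K, X)) :
    (rhoPlus f g = 0 → ∃ k₀ : K, ‖f k₀‖ = ‖f‖ ∧ rhoPlus (f k₀) (g k₀) = 0) ∧
    (rhoMinus f g = 0 → ∃ k₀ : K, ‖f k₀‖ = ‖f‖ ∧ rhoMinus (f k₀) (g k₀) = 0) := by
  have : Nonempty K := by
    have hf0 : f ≠ 0 := norm_ne_zero_iff.mp (hf ▸ one_ne_zero)
    obtain ⟨k, -⟩ := DFunLike.ne_iff.mp hf0
    exact ⟨k⟩
  constructor
  · intro h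
    obtain ⟨k, hk, hρ⟩ := exists_norm_apply_eq_and_rhoPlus_eq f g
    exact ⟨k, hk, hρ.trans h⟩
  · intro h
    obtain ⟨k, hk, hρ⟩ := exists_norm_apply_eq_and_rhoPlus_eq f (-g)
    refine ⟨k, hk, ?_⟩
    rw [rhoMinus_eq_neg_rhoPlus_neg] at h ⊢
    rw [← ContinuousMap.neg_apply, hρ, h]

theorem stmt7 {K X : Type*} [TopologicalSpace K] [CompactSpace K] [T2Space K]
    [NormedAddCommGroup X] [NormedSpace ℝ X] [CompleteSpace X]
    (f : C(K, X)) (hf : ‖f‖ = 1) (g : C(K, X)) :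
    (rhoPlus f g = 0 → ∃ k₀ : K, ‖f k₀‖ = ‖f‖ ∧ rhoPlus (f k₀) (g k₀) = 0) ∧
    (rhoMinus f g = 0 → ∃ k₀ : K, ‖f k₀‖ = ‖f‖ ∧ rhoMinus (f k₀) (g k₀) = 0) :=
  stmt7_general f hf g
end
end

section
/- Let K be a compact, perfectly normal topological space. A real-valued function f ∈ C(K) with ‖f‖ = 1 is a (ρ₊)-left symmetric point of C(K) if and only if M_f = {k₀} for some k₀ ∈ K and f(k) = 0 for all k ∈ K with k ≠ k₀. -/
open Filter Topology Set Metric NormedSpace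

noncomputable section

/-! On `C(K)` the norm derivative is `ρ'₊(f, g) = max {f k * g k | k ∈ M_f}`. If `f` vanishes off
a point `k₀`, then `ρ'₊(f, g) = f k₀ * g k₀` and `ρ'₊(g, f)` vanish together. Conversely, let `f`
be left symmetric, `k₀ ∈ M_f`, and `u ≥ 0` with `u k₀ = 0`. Then `g = -(f * u)` has
`ρ'₊(f, g) = 0`, whereas `ρ'₊(g, f) = -(f k ^ 2 * u k)` at some `k` where `|g|` is maximal, which
is nonzero unless `g = 0`; a Urysohn function `u` with `u k = 1` then gives `f k = 0` for `k ≠ k₀`.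
-/

def IsRhoPlusLeftSymmetric {E : Type*} [NormedAddCommGroup E] [NormedSpace ℝ E] (x : E) : Prop :=
  ∀ y : E, rhoPlus x y = 0 → rhoPlus y x = 0

section NormDerivative

variable {E : Type*} [NormedAddCommGroup E] [NormedSpace ℝ E]

def normDiffQuot (x y : E) (t : ℝ) : ℝ := (‖x + t • y‖ - ‖x‖) / t

theorem monotoneOn_normDiffQuot (x y : E) : MonotoneOn (normDiffQuot x y) (Ioi 0) := by
  rintro s (hs : 0 < s) t (ht : 0 < t) hst
  have hchord : t * ‖x + s • y‖ ≤ s * ‖x + t • y‖ + (t - s) * ‖x‖ :=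
    calc t * ‖x + s • y‖ = ‖t • (x + s • y)‖ := by rw [norm_smul, Real.norm_of_nonneg ht.le]
      _ = ‖s • (x + t • y) + (t - s) • x‖ := by congr 1; module
      _ ≤ ‖s • (x + t • y)‖ + ‖(t - s) • x‖ := norm_add_le _ _
      _ = s * ‖x + t • y‖ + (t - s) * ‖x‖ := by
          rw [norm_smul, norm_smul, Real.norm_of_nonneg hs.le, Real.norm_of_nonneg (by linarith)]
  rw [normDiffQuot, normDiffQuot, div_le_div_iff₀ hs ht]
  nlinarith

theorem neg_norm_le_normDiffQuot (x y : E) {t : ℝ} (ht : 0 < t) : -‖y‖ ≤ normDiffQuot x y t := by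
  have h := norm_sub_norm_le x (-(t • y))
  rw [sub_neg_eq_add, norm_neg, norm_smul, Real.norm_of_nonneg ht.le] at h
  rw [normDiffQuot, le_div_iff₀ ht]
  linarith

theorem tendsto_rhoPlus (x y : E) :
    Tendsto (fun t => ‖x‖ * normDiffQuot x y t) (𝓝[>] 0) (𝓝 (rhoPlus x y)) := by
  have hbdd : BddBelow (normDiffQuot x y '' Ioi 0) :=
    ⟨-‖y‖, by rintro _ ⟨t, ht, rfl⟩; exact neg_norm_le_normDiffQuot x y ht⟩
  exact (tendsto_nhds_limUnder ⟨_, (monotoneOn_normDiffQuot x y).tendsto_nhdsGT hbdd⟩).const_mul _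

theorem norm_mul_normDiffQuot_le_iff {x y : E} {t a : ℝ} (ht : 0 < t) :
    ‖x‖ * normDiffQuot x y t ≤ a ↔ ‖x‖ * ‖x + t • y‖ ≤ ‖x‖ ^ 2 + t * a := by
  rw [normDiffQuot, mul_div_assoc', div_le_iff₀ ht]
  constructor <;> intro h <;> nlinarith

theorem rhoPlus_le_of_eventually {x y : E} {a : ℝ}
    (h : ∀ᶠ t in 𝓝[>] 0, ‖x‖ * ‖x + t • y‖ ≤ ‖x‖ ^ 2 + t * a) : rhoPlus x y ≤ a :=
  le_of_tendsto (tendsto_rhoPlus x y) <| (h.and self_mem_nhdsWithin).mono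
    fun _ ⟨h, ht⟩ => (norm_mul_normDiffQuot_le_iff ht).2 h

theorem le_rhoPlus_of_eventually {x y : E} {a : ℝ}
    (h : ∀ᶠ t in 𝓝[>] 0, ‖x‖ ^ 2 + t * a ≤ ‖x‖ * ‖x + t • y‖) : a ≤ rhoPlus x y := by
  refine ge_of_tendsto (tendsto_rhoPlus x y) <|
    (h.and self_mem_nhdsWithin).mono fun t ⟨h, ht⟩ => ?_
  rw [normDiffQuot, mul_div_assoc', le_div_iff₀ ht]
  nlinarith

end NormDerivative

theorem mul_abs_add_mul_le {N u v a t : ℝ} (ht : 0 ≤ t) (hu : |u| ≤ N) (htv : t * |v| < |u|)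
    (huv : N * (u * v) ≤ a * |u|) : N * |u + t * v| ≤ N ^ 2 + t * a := by
  have hu0 : 0 < |u| := (mul_nonneg ht (abs_nonneg v)).trans_lt htv
  -- `t * v` is too small to change the sign of `u`, so `|u| * |u + t * v| = u * (u + t * v)`
  have hsign : |u| * |u + t * v| = u ^ 2 + t * (u * v) := by
    have : |t * (u * v)| < u ^ 2 := by
      rw [abs_mul, abs_mul, abs_of_nonneg ht, ← sq_abs]; nlinarith
    rw [← abs_mul, mul_add, ← sq, abs_of_pos (by linarith [neg_abs_le (t * (u * v))])]; ring
  have hN : 0 ≤ N := (abs_nonneg u).trans hu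
  refine le_of_mul_le_mul_left ?_ hu0
  calc |u| * (N * |u + t * v|) = N * u ^ 2 + t * (N * (u * v)) := by
        rw [mul_left_comm, hsign]; ring
    _ ≤ |u| * N ^ 2 + t * (a * |u|) := by
        refine add_le_add ?_ (mul_le_mul_of_nonneg_left huv ht)
        nlinarith [sq_abs u, mul_le_mul_of_nonneg_left hu (mul_nonneg hu0.le hN)]
    _ = |u| * (N ^ 2 + t * a) := by ring

namespace ContinuousMap

variable {K : Type*} [TopologicalSpace K] [CompactSpace K]

theorem nonempty_of_norm_ne_zero {f : C(K, ℝ)} (hf : ‖f‖ ≠ 0) : Nonempty K := by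
  by_contra hK
  rw [not_nonempty_iff] at hK
  exact hf (norm_eq_zero.2 (Subsingleton.elim f 0))

def normAttainSet (f : C(K, ℝ)) : Set K := {k | |f k| = ‖f‖}

theorem isCompact_normAttainSet (f : C(K, ℝ)) : IsCompact (normAttainSet f) :=
  (isClosed_eq (continuous_abs.comp f.continuous) continuous_const).isCompact

theorem normAttainSet_nonempty [Nonempty K] (f : C(K, ℝ)) : (normAttainSet f).Nonempty := by
  obtain ⟨k, -, hk⟩ := isCompact_univ.exists_isMaxOn univ_nonempty
    (continuous_abs.comp f.continuous).continuousOn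
  exact ⟨k, le_antisymm (f.norm_coe_le_norm k)
    ((f.norm_le (abs_nonneg _)).2 fun x => hk (mem_univ x))⟩

theorem mul_apply_le_rhoPlus {f : C(K, ℝ)} (g : C(K, ℝ)) {k : K} (hk : k ∈ normAttainSet f) :
    f k * g k ≤ rhoPlus f g := by
  refine le_rhoPlus_of_eventually (Eventually.of_forall fun t => ?_)
  calc ‖f‖ ^ 2 + t * (f k * g k) = f k * (f + t • g) k := by
        rw [← hk.out, sq_abs, add_apply, smul_apply, smul_eq_mul]; ring
    _ ≤ |f k| * |(f + t • g) k| := (le_abs_self _).trans (abs_mul _ _).le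
    _ ≤ ‖f‖ * ‖f + t • g‖ := by
        rw [hk.out]
        exact mul_le_mul_of_nonneg_left ((f + t • g).norm_coe_le_norm k) (norm_nonneg f)

theorem eventually_norm_mul_norm_add_smul_le {f g : C(K, ℝ)} {a : ℝ} (hf : 0 < ‖f‖)
    (ha : ∀ k ∈ normAttainSet f, f k * g k < a) :
    ∀ᶠ t in 𝓝[>] 0, ‖f‖ * ‖f + t • g‖ ≤ ‖f‖ ^ 2 + t * a := by
  have : Nonempty K := nonempty_of_norm_ne_zero hf.ne'
  -- on `U` the sign of `f + t • g` is that of `f`; on the compact set `Uᶜ`, `|f| < ‖f‖`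
  set U : Set K := {k | ‖f‖ * (f k * g k) < a * |f k|} ∩ {k | ‖f‖ / 2 < |f k|}
  have hU : IsOpen U :=
    (isOpen_lt (by fun_prop) (by fun_prop)).inter (isOpen_lt (by fun_prop) (by fun_prop))
  have hfar : ∀ᶠ t in 𝓝 0, ∀ k ∈ Uᶜ, ‖f‖ * |f k + t * g k| < ‖f‖ ^ 2 + t * a := by
    refine hU.isClosed_compl.isCompact.eventually_forall_of_forall_eventually fun k hk => ?_
    refine ContinuousAt.eventually_lt (by fun_prop) (by fun_prop) ?_
    have hkM : |f k| < ‖f‖ := by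
      refine (f.norm_coe_le_norm k).lt_of_ne fun hkM => hk ?_
      rw [Real.norm_eq_abs] at hkM
      refine ⟨show ‖f‖ * (f k * g k) < a * |f k| from ?_, show ‖f‖ / 2 < |f k| from ?_⟩
      · rw [hkM]; nlinarith [ha k hkM]
      · rw [hkM]; linarith
    simp only [zero_mul, add_zero]
    nlinarith
  have hnear : ∀ᶠ t in 𝓝 (0 : ℝ), t * ‖g‖ < ‖f‖ / 2 :=
    ContinuousAt.eventually_lt (by fun_prop) (by fun_prop) (by simpa using half_pos hf)
  filter_upwards [nhdsWithin_le_nhds (hfar.and hnear), self_mem_nhdsWithin]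
    with t ⟨hfar, hnear⟩ (ht : 0 < t)
  obtain ⟨k, hk⟩ := normAttainSet_nonempty (f + t • g)
  rw [← hk.out]
  simp only [add_apply, smul_apply, smul_eq_mul]
  by_cases hkU : k ∈ U
  · refine mul_abs_add_mul_le ht.le (f.norm_coe_le_norm k) ?_ hkU.1.le
    calc t * |g k| ≤ t * ‖g‖ := mul_le_mul_of_nonneg_left (g.norm_coe_le_norm k) ht.le
      _ < |f k| := hnear.trans hkU.2
  · exact (hfar k hkU).le

theorem isGreatest_rhoPlus [Nonempty K] (f g : C(K, ℝ)) :
    IsGreatest ((fun k => f k * g k) '' normAttainSet f) (rhoPlus f g) := by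
  obtain ⟨k₀, hk₀, hmax⟩ := (isCompact_normAttainSet f).exists_isMaxOn (normAttainSet_nonempty f)
    (f.continuous.mul g.continuous).continuousOn
  suffices rhoPlus f g = f k₀ * g k₀ from
    ⟨⟨k₀, hk₀, this.symm⟩, by rintro _ ⟨k, hk, rfl⟩; exact mul_apply_le_rhoPlus g hk⟩
  refine le_antisymm ?_ (mul_apply_le_rhoPlus g hk₀)
  rcases (norm_nonneg f).eq_or_lt with hf | hf
  · have hfk₀ : f k₀ = 0 := abs_eq_zero.1 (hk₀.out.trans hf.symm)
    simp [rhoPlus, ← hf, hfk₀]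
  · exact le_of_forall_gt_imp_ge_of_dense fun a ha => rhoPlus_le_of_eventually <|
      eventually_norm_mul_norm_add_smul_le hf fun k hk => (hmax hk).trans_lt ha

theorem mul_eq_zero_of_isRhoPlusLeftSymmetric {f u : C(K, ℝ)} (hsym : IsRhoPlusLeftSymmetric f)
    (hu : 0 ≤ u) {k₀ : K} (hk₀ : k₀ ∈ normAttainSet f) (huk₀ : u k₀ = 0) : f * u = 0 := by
  have : Nonempty K := ⟨k₀⟩
  set g := -(f * u) with hg
  have hfg : rhoPlus f g = 0 := by
    obtain ⟨k, -, hk : f k * g k = rhoPlus f g⟩ := (isGreatest_rhoPlus f g).1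
    refine le_antisymm ?_ (by simpa [hg, huk₀] using mul_apply_le_rhoPlus g hk₀)
    have huk : 0 ≤ u k := hu k
    rw [← hk, hg, neg_apply, mul_apply]
    nlinarith [mul_self_nonneg (f k)]
  obtain ⟨k, hk, hgf : g k * f k = rhoPlus g f⟩ := (isGreatest_rhoPlus g f).1
  rw [hsym g hfg] at hgf
  by_contra hne
  have hgk : g k ≠ 0 := fun hgk =>
    neg_ne_zero.2 hne (norm_eq_zero.1 (hk.out.symm.trans (by simp [hgk])))
  have hfk : f k = 0 := (mul_eq_zero.1 hgf).resolve_left hgk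
  exact hgk (by simp [hg, hfk])

theorem apply_eq_zero_of_isRhoPlusLeftSymmetric [T2Space K] {f : C(K, ℝ)}
    (hsym : IsRhoPlusLeftSymmetric f) {k₀ k : K} (hk₀ : k₀ ∈ normAttainSet f) (hk : k ≠ k₀) :
    f k = 0 := by
  obtain ⟨u, hu₀, hu₁, hu01⟩ := exists_continuous_zero_one_of_isClosed
    (isClosed_singleton (x := k₀)) (isClosed_singleton (x := k)) (disjoint_singleton.2 hk.symm)
  have hfu := mul_eq_zero_of_isRhoPlusLeftSymmetric hsym (fun x => (hu01 x).1) hk₀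
    (by simpa using hu₀ rfl)
  simpa [hu₁ rfl] using congr($hfu k)

theorem isRhoPlusLeftSymmetric_of_forall_ne_apply_eq_zero {f : C(K, ℝ)} {k₀ : K}
    (hz : ∀ k ≠ k₀, f k = 0) : IsRhoPlusLeftSymmetric f := by
  have : Nonempty K := ⟨k₀⟩
  intro g hfg
  have hgk₀ : f k₀ * g k₀ = 0 := by
    obtain ⟨k, hk, hfgk : f k * g k = rhoPlus f g⟩ := (isGreatest_rhoPlus f g).1
    rcases eq_or_ne k k₀ with rfl | hne
    · rwa [hfgk]
    · have hf : f = 0 := norm_eq_zero.1 (by rw [← hk.out, hz k hne, abs_zero])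
      simp [hf]
  obtain ⟨k, -, hgfk : g k * f k = rhoPlus g f⟩ := (isGreatest_rhoPlus g f).1
  rw [← hgfk]
  rcases eq_or_ne k k₀ with rfl | hne
  · rw [mul_comm, hgk₀]
  · rw [hz k hne, mul_zero]

end ContinuousMap

theorem stmt12_general {K : Type*} [TopologicalSpace K] [CompactSpace K] [T2Space K]
    (f : C(K, ℝ)) (hf : ‖f‖ = 1) :
    (∀ g : C(K, ℝ), rhoPlus f g = 0 → rhoPlus g f = 0) ↔
      (∃ k₀ : K, {k : K | |f k| = ‖f‖} = {k₀} ∧ ∀ k : K, k ≠ k₀ → f k = 0) := by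
  refine ⟨fun hsym => ?_, fun ⟨k₀, _, hz⟩ =>
    ContinuousMap.isRhoPlusLeftSymmetric_of_forall_ne_apply_eq_zero hz⟩
  have : Nonempty K := ContinuousMap.nonempty_of_norm_ne_zero (hf ▸ one_ne_zero)
  obtain ⟨k₀, hk₀⟩ := ContinuousMap.normAttainSet_nonempty f
  have hz : ∀ k ≠ k₀, f k = 0 := fun k hk =>
    ContinuousMap.apply_eq_zero_of_isRhoPlusLeftSymmetric hsym hk₀ hk
  refine ⟨k₀, eq_singleton_iff_unique_mem.2 ⟨hk₀, fun k hk => by_contra fun hne => ?_⟩, hz⟩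
  have hk : |f k| = ‖f‖ := hk
  simp [hz k hne, hf] at hk

theorem stmt12 {K : Type*} [TopologicalSpace K] [CompactSpace K] [T2Space K]
    [PerfectlyNormalSpace K]
    (f : C(K, ℝ)) (hf : ‖f‖ = 1) :
    (∀ g : C(K, ℝ), rhoPlus f g = 0 → rhoPlus g f = 0) ↔
      (∃ k₀ : K, {k : K | |f k| = ‖f‖} = {k₀} ∧ ∀ k : K, k ≠ k₀ → f k = 0) :=
  stmt12_general f hf
end
end
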